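/- arXiv:1006.0394 — 5 statements merged into one kernel-verified Lean document; each statement's English description precedes it below -/
import Mathlib

section
/- Suppose f = g - h and f' = g' - h' where g, h, g', h' : [0,1] → ℝ are each pointwise limits of pointwise increasing sequences of continuous functions. Then f + f', f - f', and f · f' can each be written as a difference of two functions that are pointwise limits of pointwise increasing sequences of continuous functions. -/
/-! `f f'` is a difference of two such limits once `g, h, g', h'` are shifted by a common
constant `D` to become nonnegative limits, since
`(g - h)(g' - h') = ((g+D)(g'+D) + (h+D)(h'+D)) - ((g+D)(h'+D) + (h+D)(g'+D))`
and products of nonnegative increasing sequences increase. The shift exists because the first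
continuous approximant is bounded below on the compact interval and all later ones lie above it. -/

open Filter Topology

/-- Pointwise limit on `[0,1]` of a pointwise increasing sequence of continuous functions. -/
def IsLSCLimit (f : ℝ → ℝ) : Prop :=
  ∃ pg : ℕ → ℝ → ℝ,
    (∀ n, ContinuousOn (pg n) (Set.Icc 0 1)) ∧
    (∀ n, ∀ x ∈ Set.Icc (0:ℝ) 1, pg n x ≤ pg (n + 1) x) ∧
    (∀ x ∈ Set.Icc (0:ℝ) 1, Tendsto (fun n => pg n x) atTop (𝓝 (f x)))

def IsNonnegLSCLimit (f : ℝ → ℝ) : Prop :=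
  ∃ pg : ℕ → ℝ → ℝ,
    (∀ n, ContinuousOn (pg n) (Set.Icc 0 1)) ∧
    (∀ n, ∀ x ∈ Set.Icc (0:ℝ) 1, 0 ≤ pg n x) ∧
    (∀ n, ∀ x ∈ Set.Icc (0:ℝ) 1, pg n x ≤ pg (n + 1) x) ∧
    (∀ x ∈ Set.Icc (0:ℝ) 1, Tendsto (fun n => pg n x) atTop (𝓝 (f x)))

def IsDiffOfLSCLimits (f : ℝ → ℝ) : Prop :=
  ∃ a b : ℝ → ℝ, IsLSCLimit a ∧ IsLSCLimit b ∧ ∀ x ∈ Set.Icc (0:ℝ) 1, f x = a x - b x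

lemma IsNonnegLSCLimit.isLSCLimit {f : ℝ → ℝ} (h : IsNonnegLSCLimit f) : IsLSCLimit f :=
  let ⟨p, hc, _, hm, hl⟩ := h
  ⟨p, hc, hm, hl⟩

lemma IsLSCLimit.add {a b : ℝ → ℝ} (ha : IsLSCLimit a) (hb : IsLSCLimit b) :
    IsLSCLimit (fun x => a x + b x) := by
  obtain ⟨p, pc, pm, pl⟩ := ha
  obtain ⟨q, qc, qm, ql⟩ := hb
  exact ⟨fun n x => p n x + q n x, fun n => (pc n).add (qc n),
    fun n x hx => add_le_add (pm n x hx) (qm n x hx),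
    fun x hx => (pl x hx).add (ql x hx)⟩

lemma IsNonnegLSCLimit.mul {a b : ℝ → ℝ} (ha : IsNonnegLSCLimit a) (hb : IsNonnegLSCLimit b) :
    IsNonnegLSCLimit (fun x => a x * b x) := by
  obtain ⟨p, pc, pn, pm, pl⟩ := ha
  obtain ⟨q, qc, qn, qm, ql⟩ := hb
  exact ⟨fun n x => p n x * q n x, fun n => (pc n).mul (qc n),
    fun n x hx => mul_nonneg (pn n x hx) (qn n x hx),
    fun n x hx => mul_le_mul (pm n x hx) (qm n x hx) (qn n x hx) ((pn n x hx).trans (pm n x hx)),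
    fun x hx => (pl x hx).mul (ql x hx)⟩

lemma IsLSCLimit.exists_isNonnegLSCLimit_add_const {g : ℝ → ℝ} (hg : IsLSCLimit g) :
    ∃ C : ℝ, ∀ D : ℝ, C ≤ D → IsNonnegLSCLimit (fun x => g x + D) := by
  obtain ⟨p, pc, pm, pl⟩ := hg
  obtain ⟨x₀, -, hmin⟩ :=
    isCompact_Icc.exists_isMinOn (Set.nonempty_Icc.2 zero_le_one) (pc 0)
  refine ⟨-p 0 x₀, fun D hD => ⟨fun n x => p n x + D, fun n => (pc n).add continuousOn_const,
    fun n x hx => ?_, fun n x hx => add_le_add_left (pm n x hx) D,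
    fun x hx => (pl x hx).add_const D⟩⟩
  have h₀ : p 0 x₀ ≤ p 0 x := hmin hx
  have hn : p 0 x ≤ p n x := monotone_nat_of_le_succ (fun k => pm k x hx) (Nat.zero_le n)
  show 0 ≤ p n x + D
  linarith

lemma IsDiffOfLSCLimits.add {f f' : ℝ → ℝ} (hf : IsDiffOfLSCLimits f)
    (hf' : IsDiffOfLSCLimits f') : IsDiffOfLSCLimits (fun x => f x + f' x) := by
  obtain ⟨g, h, hg, hh, hfgh⟩ := hf
  obtain ⟨g', h', hg', hh', hfgh'⟩ := hf'
  refine ⟨fun x => g x + g' x, fun x => h x + h' x, hg.add hg', hh.add hh', fun x hx => ?_⟩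
  simp only [hfgh x hx, hfgh' x hx]
  ring

lemma IsDiffOfLSCLimits.sub {f f' : ℝ → ℝ} (hf : IsDiffOfLSCLimits f)
    (hf' : IsDiffOfLSCLimits f') : IsDiffOfLSCLimits (fun x => f x - f' x) := by
  obtain ⟨g, h, hg, hh, hfgh⟩ := hf
  obtain ⟨g', h', hg', hh', hfgh'⟩ := hf'
  refine ⟨fun x => g x + h' x, fun x => h x + g' x, hg.add hh', hh.add hg', fun x hx => ?_⟩
  simp only [hfgh x hx, hfgh' x hx]
  ring

lemma IsDiffOfLSCLimits.mul {f f' : ℝ → ℝ} (hf : IsDiffOfLSCLimits f)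
    (hf' : IsDiffOfLSCLimits f') : IsDiffOfLSCLimits (fun x => f x * f' x) := by
  obtain ⟨g, h, hg, hh, hfgh⟩ := hf
  obtain ⟨g', h', hg', hh', hfgh'⟩ := hf'
  obtain ⟨C₁, H₁⟩ := hg.exists_isNonnegLSCLimit_add_const
  obtain ⟨C₂, H₂⟩ := hh.exists_isNonnegLSCLimit_add_const
  obtain ⟨C₃, H₃⟩ := hg'.exists_isNonnegLSCLimit_add_const
  obtain ⟨C₄, H₄⟩ := hh'.exists_isNonnegLSCLimit_add_const
  set D := max (max C₁ C₂) (max C₃ C₄)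
  have n₁ := H₁ D ((le_max_left _ _).trans (le_max_left _ _))
  have n₂ := H₂ D ((le_max_right _ _).trans (le_max_left _ _))
  have n₃ := H₃ D ((le_max_left _ _).trans (le_max_right _ _))
  have n₄ := H₄ D ((le_max_right _ _).trans (le_max_right _ _))
  refine ⟨fun x => (g x + D) * (g' x + D) + (h x + D) * (h' x + D),
    fun x => (g x + D) * (h' x + D) + (h x + D) * (g' x + D),
    (n₁.mul n₃).isLSCLimit.add (n₂.mul n₄).isLSCLimit,
    (n₁.mul n₄).isLSCLimit.add (n₂.mul n₃).isLSCLimit, fun x hx => ?_⟩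
  simp only [hfgh x hx, hfgh' x hx]
  ring

theorem stmt7_general (f f' g h g' h' : ℝ → ℝ)
    (hg : IsLSCLimit g) (hh : IsLSCLimit h)
    (hg' : IsLSCLimit g') (hh' : IsLSCLimit h')
    (hf : ∀ x ∈ Set.Icc (0:ℝ) 1, f x = g x - h x)
    (hf' : ∀ x ∈ Set.Icc (0:ℝ) 1, f' x = g' x - h' x) :
    (∃ a b : ℝ → ℝ, IsLSCLimit a ∧ IsLSCLimit b ∧
      ∀ x ∈ Set.Icc (0:ℝ) 1, f x + f' x = a x - b x) ∧
    (∃ a b : ℝ → ℝ, IsLSCLimit a ∧ IsLSCLimit b ∧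
      ∀ x ∈ Set.Icc (0:ℝ) 1, f x - f' x = a x - b x) ∧
    (∃ a b : ℝ → ℝ, IsLSCLimit a ∧ IsLSCLimit b ∧
      ∀ x ∈ Set.Icc (0:ℝ) 1, f x * f' x = a x - b x) := by
  have hd : IsDiffOfLSCLimits f := ⟨g, h, hg, hh, hf⟩
  have hd' : IsDiffOfLSCLimits f' := ⟨g', h', hg', hh', hf'⟩
  exact ⟨hd.add hd', hd.sub hd', hd.mul hd'⟩

theorem stmt7 (f f' g h g' h' : ℝ → ℝ)
    (hg : IsLSCLimit g) (hh : IsLSCLimit h)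
    (hg' : IsLSCLimit g') (hh' : IsLSCLimit h')
    (hf : ∀ x ∈ Set.Icc (0:ℝ) 1, f x = g x - h x)
    (hf' : ∀ x ∈ Set.Icc (0:ℝ) 1, f' x = g' x - h' x)
    (hcf : ContinuousOn f (Set.Icc 0 1))
    (hcf' : ContinuousOn f' (Set.Icc 0 1)) :
    (∃ a b : ℝ → ℝ, IsLSCLimit a ∧ IsLSCLimit b ∧
      ∀ x ∈ Set.Icc (0:ℝ) 1, f x + f' x = a x - b x) ∧
    (∃ a b : ℝ → ℝ, IsLSCLimit a ∧ IsLSCLimit b ∧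
      ∀ x ∈ Set.Icc (0:ℝ) 1, f x - f' x = a x - b x) ∧
    (∃ a b : ℝ → ℝ, IsLSCLimit a ∧ IsLSCLimit b ∧
      ∀ x ∈ Set.Icc (0:ℝ) 1, f x * f' x = a x - b x) :=
  stmt7_general f f' g h g' h' hg hh hg' hh' hf hf'
end

section
/- If (y_s) and (z_s) are increasing sequences of rationals converging to g and h, and u_s = y_s - z_s, then ∑_{s=0}^∞ |u_{s+1} - u_s| ≤ (g - y_0) + (h - z_0). Conversely, if (u_s) is a sequence of rationals with ∑_{s=0}^∞ |u_{s+1} - u_s| ≤ c, then the sequences y_s = u_0 + ∑_{i=0}^{s}(u_{i+1} ∸ u_i) and z_s = ∑_{i=0}^{s}(u_i ∸ u_{i+1}) are increasing, bounded above by u_0 + c and c respectively, and satisfy u_{s+1} = y_s - z_s for all s. -/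
/-!
An increasing pair `y, z` moves `u = y - z` by at most `Δy + Δz` per step, so the total variation
of `u` telescopes to at most `(g - y₀) + (h - z₀)`. Conversely, splitting each increment of `u`
into its positive and negative parts, `Δu = max Δu 0 - max (-Δu) 0`, writes `u` as the difference
of two increasing sequences, each dominated by the total variation of `u`.
-/

open Filter Topology Finset

section VariationSplitting

variable {α : Type*} [AddCommGroup α] [LinearOrder α] [IsOrderedAddMonoid α]

lemma abs_sub_sub_sub_le_of_le {a a' b b' : α} (ha : a ≤ a') (hb : b ≤ b') :
    |(a' - b') - (a - b)| ≤ (a' - a) + (b' - b) := by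
  calc |(a' - b') - (a - b)| = |(a' - a) - (b' - b)| := by abel_nf
    _ ≤ |a' - a| + |b' - b| := abs_sub _ _
    _ = (a' - a) + (b' - b) := by
      rw [abs_of_nonneg (sub_nonneg.2 ha), abs_of_nonneg (sub_nonneg.2 hb)]

lemma sum_range_abs_sub_sub_sub_le {y z : ℕ → α} (hy : Monotone y) (hz : Monotone z) (N : ℕ) :
    ∑ s ∈ range N, |(y (s + 1) - z (s + 1)) - (y s - z s)| ≤ (y N - y 0) + (z N - z 0) :=
  calc ∑ s ∈ range N, |(y (s + 1) - z (s + 1)) - (y s - z s)|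
      ≤ ∑ s ∈ range N, ((y (s + 1) - y s) + (z (s + 1) - z s)) :=
        sum_le_sum fun s _ => abs_sub_sub_sub_le_of_le (hy s.le_succ) (hz s.le_succ)
    _ = (y N - y 0) + (z N - z 0) := by
        rw [sum_add_distrib, sum_range_sub y, sum_range_sub z]

lemma monotone_sum_range_succ_of_nonneg {f : ℕ → α} (hf : ∀ i, 0 ≤ f i) :
    Monotone fun s => ∑ i ∈ range (s + 1), f i :=
  fun _ _ hst => sum_le_sum_of_subset_of_nonneg (range_subset_range.2 (by omega))
    fun i _ _ => hf i

lemma sum_range_max_sub_zero_le_sum_abs (u : ℕ → α) (n : ℕ) :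
    ∑ i ∈ range n, max (u (i + 1) - u i) 0 ≤ ∑ i ∈ range n, |u (i + 1) - u i| :=
  sum_le_sum fun _ _ => max_le (le_abs_self _) (abs_nonneg _)

lemma sum_range_max_sub_zero_le_sum_abs' (u : ℕ → α) (n : ℕ) :
    ∑ i ∈ range n, max (u i - u (i + 1)) 0 ≤ ∑ i ∈ range n, |u (i + 1) - u i| :=
  sum_le_sum fun _ _ => abs_sub_comm (u _) _ ▸ max_le (le_abs_self _) (abs_nonneg _)

lemma add_sum_range_max_sub_sub_sum_range_max_sub (u : ℕ → α) (n : ℕ) :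
    u 0 + ∑ i ∈ range n, max (u (i + 1) - u i) 0 - ∑ i ∈ range n, max (u i - u (i + 1)) 0
      = u n := by
  have hsplit : ∀ i, max (u (i + 1) - u i) 0 - max (u i - u (i + 1)) 0 = u (i + 1) - u i :=
    fun i => by rw [← neg_sub (u (i + 1)), max_zero_sub_eq_self]
  rw [add_sub_assoc, ← sum_sub_distrib, sum_congr rfl fun i _ => hsplit i, sum_range_sub u,
    add_sub_cancel]

end VariationSplitting

theorem Monotone.summable_abs_sub_sub_sub_and_tsum_le {y z : ℕ → ℝ} {g h : ℝ}
    (hy : Monotone y) (hz : Monotone z) (hyg : Tendsto y atTop (𝓝 g))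
    (hzh : Tendsto z atTop (𝓝 h)) :
    Summable (fun s => |(y (s + 1) - z (s + 1)) - (y s - z s)|) ∧
      ∑' s, |(y (s + 1) - z (s + 1)) - (y s - z s)| ≤ (g - y 0) + (h - z 0) := by
  have hbound : ∀ N, ∑ s ∈ range N, |(y (s + 1) - z (s + 1)) - (y s - z s)|
      ≤ (g - y 0) + (h - z 0) := fun N => by
    have hyN : y N ≤ g := hy.ge_of_tendsto hyg N
    have hzN : z N ≤ h := hz.ge_of_tendsto hzh N
    linarith [sum_range_abs_sub_sub_sub_le hy hz N]
  have hsum := summable_of_sum_range_le (fun _ => abs_nonneg _) hbound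
  exact ⟨hsum, hsum.tsum_le_of_sum_range_le hbound⟩

theorem stmt11 :
    (∀ (y z : ℕ → ℚ) (g h : ℝ), Monotone y → Monotone z →
      Tendsto (fun s => (y s : ℝ)) atTop (𝓝 g) →
      Tendsto (fun s => (z s : ℝ)) atTop (𝓝 h) →
      Summable (fun s : ℕ => |((((y (s + 1) - z (s + 1)) - (y s - z s)) : ℚ) : ℝ)|) ∧
      (∑' s : ℕ, |((((y (s + 1) - z (s + 1)) - (y s - z s)) : ℚ) : ℝ)|) ≤
        (g - (y 0 : ℝ)) + (h - (z 0 : ℝ))) ∧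
    (∀ (u : ℕ → ℚ) (c : ℝ),
      (∀ N : ℕ, (∑ s ∈ Finset.range N, |(u (s + 1) : ℝ) - (u s : ℝ)|) ≤ c) →
      Monotone (fun s : ℕ => u 0 + ∑ i ∈ Finset.range (s + 1), max (u (i + 1) - u i) 0) ∧
      Monotone (fun s : ℕ => ∑ i ∈ Finset.range (s + 1), max (u i - u (i + 1)) 0) ∧
      (∀ s : ℕ, ((u 0 + ∑ i ∈ Finset.range (s + 1), max (u (i + 1) - u i) 0 : ℚ) : ℝ) ≤
        (u 0 : ℝ) + c) ∧
      (∀ s : ℕ, ((∑ i ∈ Finset.range (s + 1), max (u i - u (i + 1)) 0 : ℚ) : ℝ) ≤ c) ∧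
      (∀ s : ℕ, u (s + 1) =
        (u 0 + ∑ i ∈ Finset.range (s + 1), max (u (i + 1) - u i) 0) -
        ∑ i ∈ Finset.range (s + 1), max (u i - u (i + 1)) 0)) := by
  refine ⟨fun y z g h hy hz hyg hzh => ?_, fun u c hc => ?_⟩
  · simpa only [Rat.cast_sub, Function.comp_apply] using (Rat.cast_mono.comp hy).summable_abs_sub_sub_sub_and_tsum_le
      (Rat.cast_mono.comp hz) hyg hzh
  · refine ⟨(monotone_sum_range_succ_of_nonneg fun _ => le_max_right _ _).const_add _,
      monotone_sum_range_succ_of_nonneg fun _ => le_max_right _ _, fun s => ?_, fun s => ?_,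
      fun s => (add_sum_range_max_sub_sub_sum_range_max_sub u (s + 1)).symm⟩
    · push_cast
      exact add_le_add_right ((sum_range_max_sub_zero_le_sum_abs (fun i => (u i : ℝ)) _).trans (hc (s + 1))) _
    · push_cast
      exact (sum_range_max_sub_zero_le_sum_abs' (fun i => (u i : ℝ)) _).trans (hc (s + 1))
end

section
/- Let (x_s) be a sequence of rationals with |x - x_s| ≤ 2^{-s} for all s, and let (pg_s) be a pointwise increasing sequence of continuous functions on [0,1] converging pointwise to a continuous f, where each pg_s is Lipschitz with some constant and m_s : ℕ → ℕ satisfies: |x - y| < 2^{-m_s(t)} implies |pg_s(x) - pg_s(y)| < 2^{-t}. Define y_s = pg_s(x_{m_s(s)}) - 2^{-s} and z_s = max{y_t : t ≤ s}. Then (z_s) is an increasing sequence converging to f(x) with z_s ≤ f(x) for all s. -/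
open Filter Topology

theorem stmt12 (f : ℝ → ℝ) (pg : ℕ → ℝ → ℝ) (x : ℝ) (xs : ℕ → ℚ) (m : ℕ → ℕ → ℕ)
    (hx : x ∈ Set.Icc (0:ℝ) 1)
    (hxs : ∀ s : ℕ, |x - (xs s : ℝ)| ≤ 2 ^ (-(s : ℤ)))
    (hf : ContinuousOn f (Set.Icc 0 1))
    (hpg : ∀ s, ContinuousOn (pg s) (Set.Icc 0 1))
    (hmono : ∀ s, ∀ u ∈ Set.Icc (0:ℝ) 1, pg s u ≤ pg (s + 1) u)
    (hbelow : ∀ s, ∀ u ∈ Set.Icc (0:ℝ) 1, pg s u ≤ f u)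
    (hlim : ∀ u ∈ Set.Icc (0:ℝ) 1, Tendsto (fun s => pg s u) atTop (𝓝 (f u)))
    (hmod : ∀ s t : ℕ, ∀ u v : ℝ,
      |u - v| ≤ 2 ^ (-(m s t : ℤ)) → |pg s u - pg s v| ≤ 2 ^ (-(t : ℤ))) :
    Monotone (fun s : ℕ =>
      (Finset.range (s + 1)).sup' (by simp) (fun t => pg t (xs (m t t)) - 2 ^ (-(t : ℤ)))) ∧
    (∀ s : ℕ, (Finset.range (s + 1)).sup' (by simp)
      (fun t => pg t (xs (m t t)) - 2 ^ (-(t : ℤ))) ≤ f x) ∧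
    Tendsto (fun s : ℕ => (Finset.range (s + 1)).sup' (by simp)
      (fun t => pg t (xs (m t t)) - 2 ^ (-(t : ℤ)))) atTop (𝓝 (f x)) := by
  have hyx : ∀ t : ℕ, pg t (xs (m t t)) - 2 ^ (-(t : ℤ)) ≤ f x := by
    intro t
    have h1 := abs_le.mp (hmod t t x (xs (m t t)) (hxs (m t t)))
    have h2 := hbelow t x hx
    linarith [h1.1, h1.2]
  have hylb : ∀ t : ℕ, pg t x - 2 ^ (-(t:ℤ)) - 2 ^ (-(t:ℤ)) ≤
      pg t (xs (m t t)) - 2 ^ (-(t : ℤ)) := by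
    intro t
    have h1 := abs_le.mp (hmod t t x (xs (m t t)) (hxs (m t t)))
    linarith [h1.1, h1.2]
  refine ⟨?_, ?_, ?_⟩
  · intro a b hab
    dsimp only
    refine Finset.sup'_le _ _ fun t ht => Finset.le_sup' (fun t => pg t (xs (m t t)) - 2 ^ (-(t:ℤ)))
      (show t ∈ Finset.range (b + 1) from Finset.mem_range.mpr
        (lt_of_lt_of_le (Finset.mem_range.mp ht) (by omega)))
  · intro s
    exact Finset.sup'_le _ _ fun t _ => hyx t
  · have h2 : Tendsto (fun s : ℕ => (2:ℝ)^(-(s:ℤ))) atTop (𝓝 0) := by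
      have : (fun s : ℕ => (2:ℝ)^(-(s:ℤ))) = fun s : ℕ => ((2:ℝ)⁻¹)^s := by
        funext s
        rw [zpow_neg, zpow_natCast, inv_pow]
      rw [this]
      exact tendsto_pow_atTop_nhds_zero_of_lt_one (by norm_num) (by norm_num)
    have hlow : Tendsto (fun s : ℕ => pg s x - 2^(-(s:ℤ)) - 2^(-(s:ℤ))) atTop (𝓝 (f x)) := by
      have := ((hlim x hx).sub h2).sub h2
      simpa using this
    refine tendsto_of_tendsto_of_tendsto_of_le_of_le hlow tendsto_const_nhds ?_ ?_
    · intro s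
      dsimp only
      exact le_trans (hylb s) (Finset.le_sup' (fun t => pg t (xs (m t t)) - 2 ^ (-(t:ℤ))) (Finset.self_mem_range_succ s))
    · intro s
      exact Finset.sup'_le _ _ fun t _ => hyx t
end

section
/- Suppose a sequence (u_s) of rationals satisfies ∑_{s=0}^∞ |u_{s+1} - u_s| ≤ c for some real c > 0. Then for every n ∈ ℕ, the number of non-overlapping index pairs (i, j), i < j, with |u_i - u_j| ≥ 2^{-n} is at most c · 2^n; in particular, every weakly effectively convergent sequence converges h-bounded effectively with h(n) = ⌈c⌉ · 2^n. -/
/-! By the triangle inequality, a pair `i < j` with `|u_i - u_j| ≥ 2^{-n}` uses up at least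
`2^{-n}` of the variation `∑ |u_{s+1} - u_s|` over `[i, j)`; non-overlapping pairs use up
disjoint parts of it, so there are at most `c · 2^n` of them. -/

open Finset

theorem Finset.disjoint_Ico_of_le_or_le {α : Type*} [LinearOrder α] [LocallyFiniteOrder α]
    {a b c d : α} (h : b ≤ c ∨ d ≤ a) : Disjoint (Ico a b) (Ico c d) := by
  rw [← disjoint_coe, coe_Ico, coe_Ico, Set.Ico_disjoint_Ico]
  rcases h with h | h
  · exact min_le_left _ _ |>.trans (h.trans (le_max_right _ _))
  · exact min_le_right _ _ |>.trans (h.trans (le_max_left _ _))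

theorem card_mul_le_of_sum_dist_le {α ι : Type*} [PseudoMetricSpace α] (f : ℕ → α) {c ε : ℝ}
    (hf : ∀ N, ∑ s ∈ range N, dist (f s) (f (s + 1)) ≤ c) (S : Finset ι) (p : ι → ℕ × ℕ)
    (hle : ∀ i ∈ S, (p i).1 ≤ (p i).2) (hε : ∀ i ∈ S, ε ≤ dist (f (p i).1) (f (p i).2))
    (hdisj : (S : Set ι).PairwiseDisjoint fun i => Ico (p i).1 (p i).2) :
    #S * ε ≤ c := by
  have hsub : S.biUnion (fun i => Ico (p i).1 (p i).2) ⊆ range (S.sup fun i => (p i).2) := by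
    intro t ht
    obtain ⟨i, hi, hti⟩ := mem_biUnion.1 ht
    exact mem_range.2 <| (mem_Ico.1 hti).2.trans_le (le_sup (f := fun i => (p i).2) hi)
  calc #S * ε = ∑ i ∈ S, ε := by rw [sum_const, nsmul_eq_mul]
    _ ≤ ∑ i ∈ S, ∑ t ∈ Ico (p i).1 (p i).2, dist (f t) (f (t + 1)) :=
        sum_le_sum fun i hi => (hε i hi).trans (dist_le_Ico_sum_dist f (hle i hi))
    _ = ∑ t ∈ S.biUnion (fun i => Ico (p i).1 (p i).2), dist (f t) (f (t + 1)) :=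
        (sum_biUnion hdisj).symm
    _ ≤ ∑ t ∈ range (S.sup fun i => (p i).2), dist (f t) (f (t + 1)) :=
        sum_le_sum_of_subset_of_nonneg hsub fun _ _ _ => dist_nonneg
    _ ≤ c := hf _

theorem stmt15_general (u : ℕ → ℚ) (c : ℝ)
    (hsum : ∀ N : ℕ, (∑ s ∈ Finset.range N, |(u (s + 1) : ℝ) - (u s : ℝ)|) ≤ c) :
    ∀ n : ℕ, ∀ (k : ℕ) (p : Fin k → ℕ × ℕ),
      (∀ i, (p i).1 < (p i).2) →
      (∀ i, (2:ℝ) ^ (-(n : ℤ)) ≤ |(u (p i).1 : ℝ) - (u (p i).2 : ℝ)|) →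
      (∀ i j, i ≠ j → (p i).2 ≤ (p j).1 ∨ (p j).2 ≤ (p i).1) →
      (k : ℝ) ≤ c * 2 ^ n ∧ k ≤ ⌈c⌉₊ * 2 ^ n := by
  intro n k p hlt hbig hdisj
  have hcount : (k : ℝ) * (2 ^ n)⁻¹ ≤ c := by
    simpa [zpow_neg, Real.dist_eq, abs_sub_comm] using
      card_mul_le_of_sum_dist_le (fun s => (u s : ℝ))
        (fun N => by simpa [Real.dist_eq, abs_sub_comm] using hsum N)
        univ p (fun i _ => (hlt i).le) (fun i _ => hbig i)
        (fun i _ j _ hij => disjoint_Ico_of_le_or_le (hdisj i j hij))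
  have hk : (k : ℝ) ≤ c * 2 ^ n := by
    rwa [← div_eq_mul_inv, div_le_iff₀ (by positivity)] at hcount
  have hceil : (k : ℝ) ≤ ⌈c⌉₊ * 2 ^ n :=
    hk.trans (mul_le_mul_of_nonneg_right (Nat.le_ceil c) (by positivity))
  exact ⟨hk, by exact_mod_cast hceil⟩

theorem stmt15 (u : ℕ → ℚ) (c : ℝ) (hc : 0 < c)
    (hsum : ∀ N : ℕ, (∑ s ∈ Finset.range N, |(u (s + 1) : ℝ) - (u s : ℝ)|) ≤ c) :
    ∀ n : ℕ, ∀ (k : ℕ) (p : Fin k → ℕ × ℕ),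
      (∀ i, (p i).1 < (p i).2) →
      (∀ i, (2:ℝ) ^ (-(n : ℤ)) ≤ |(u (p i).1 : ℝ) - (u (p i).2 : ℝ)|) →
      (∀ i j, i ≠ j → (p i).2 ≤ (p j).1 ∨ (p j).2 ≤ (p i).1) →
      (k : ℝ) ≤ c * 2 ^ n ∧ k ≤ ⌈c⌉₊ * 2 ^ n :=
  stmt15_general u c hsum
end

section
/- Let (pg_s) be a sequence of continuous functions on [0,1] with ∑_{s=0}^∞ d(pg_{s+1}, pg_s) ≤ 1/2 (sup-distance d), converging uniformly to f. Let x ∈ [0,1] and (x_t) a sequence of rationals with |x - x_t| ≤ 2^{-t}, and let m : ℕ² → ℕ be such that |u - v| ≤ 2^{-m(i,s)} implies |pg_i(u) - pg_i(v)| ≤ 2^{-(s+3)}, with m increasing in both arguments. Define y_s = pg_s(x_{m(s,s)}). Then y_s → f(x) and ∑_{s=0}^∞ |y_{s+1} - y_s| ≤ 1. -/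
open Filter Topology

theorem stmt16 (f : ℝ → ℝ) (pg : ℕ → ℝ → ℝ) (x : ℝ) (xs : ℕ → ℚ) (m : ℕ → ℕ → ℕ)
    (hpg : ∀ s, ContinuousOn (pg s) (Set.Icc 0 1))
    (hsum : Summable fun s : ℕ => ⨆ z : Set.Icc (0:ℝ) 1, |pg (s + 1) z - pg s z|)
    (hhalf : (∑' s : ℕ, ⨆ z : Set.Icc (0:ℝ) 1, |pg (s + 1) z - pg s z|) ≤ 1 / 2)
    (hunif : TendstoUniformlyOn pg f atTop (Set.Icc 0 1))
    (hx : x ∈ Set.Icc (0:ℝ) 1)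
    (hxs : ∀ t : ℕ, |x - (xs t : ℝ)| ≤ 2 ^ (-(t : ℤ)))
    (hmod : ∀ i s : ℕ, ∀ u v : ℝ,
      |u - v| ≤ 2 ^ (-(m i s : ℤ)) → |pg i u - pg i v| ≤ 2 ^ (-(s : ℤ) - 3))
    (hmmono : ∀ i i' s s' : ℕ, i ≤ i' → s ≤ s' → m i s ≤ m i' s') :
    Tendsto (fun s : ℕ => pg s (xs (m s s))) atTop (𝓝 (f x)) ∧
    Summable (fun s : ℕ => |pg (s + 1) (xs (m (s + 1) (s + 1))) - pg s (xs (m s s))|) ∧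
    (∑' s : ℕ, |pg (s + 1) (xs (m (s + 1) (s + 1))) - pg s (xs (m s s))|) ≤ 1 := by
  set d : ℕ → ℝ := fun s => ⨆ z : Set.Icc (0:ℝ) 1, |pg (s + 1) z - pg s z| with hd
  -- boundedness of the sup
  have hbdd : ∀ s, BddAbove (Set.range fun z : Set.Icc (0:ℝ) 1 => |pg (s + 1) z - pg s z|) := by
    intro s
    have hc : Continuous fun z : Set.Icc (0:ℝ) 1 => |pg (s + 1) z - pg s z| :=
      (((hpg (s+1)).restrict).sub ((hpg s).restrict)).abs
    exact (isCompact_range hc).bddAbove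
  have hdle : ∀ s, |pg (s + 1) x - pg s x| ≤ d s := fun s =>
    le_ciSup (hbdd s) (⟨x, hx⟩ : Set.Icc (0:ℝ) 1)
  -- modulus estimates
  have hnear : ∀ s : ℕ, |pg s (xs (m s s)) - pg s x| ≤ 2 ^ (-(s:ℤ) - 3) := by
    intro s
    refine hmod s s _ x ?_
    rw [abs_sub_comm]
    exact hxs (m s s)
  -- key pointwise bound
  have hkey : ∀ s : ℕ, |pg (s + 1) (xs (m (s + 1) (s + 1))) - pg s (xs (m s s))|
      ≤ 2 ^ (-(s:ℤ) - 2) + d s := by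
    intro s
    have h1 : |pg (s+1) (xs (m (s+1) (s+1))) - pg (s+1) x| ≤ 2 ^ (-((s+1:ℕ):ℤ) - 3) := by
      refine hmod (s+1) (s+1) _ x ?_
      rw [abs_sub_comm]
      exact hxs (m (s+1) (s+1))
    have h3 : |pg s x - pg s (xs (m s s))| ≤ 2 ^ (-(s:ℤ) - 3) := by
      rw [abs_sub_comm]; exact hnear s
    have h2 := hdle s
    have tri : |pg (s + 1) (xs (m (s + 1) (s + 1))) - pg s (xs (m s s))|
        ≤ |pg (s+1) (xs (m (s+1) (s+1))) - pg (s+1) x| + |pg (s+1) x - pg s x|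
          + |pg s x - pg s (xs (m s s))| := by
      have := abs_sub_le (pg (s+1) (xs (m (s+1) (s+1)))) (pg (s+1) x) (pg s (xs (m s s)))
      have := abs_sub_le (pg (s+1) x) (pg s x) (pg s (xs (m s s)))
      calc |pg (s + 1) (xs (m (s + 1) (s + 1))) - pg s (xs (m s s))|
          ≤ |pg (s+1) (xs (m (s+1) (s+1))) - pg (s+1) x| + |pg (s+1) x - pg s (xs (m s s))| :=
            abs_sub_le _ _ _
        _ ≤ |pg (s+1) (xs (m (s+1) (s+1))) - pg (s+1) x|
            + (|pg (s+1) x - pg s x| + |pg s x - pg s (xs (m s s))|) := by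
            gcongr
        _ = _ := by ring
    have hpow : (2:ℝ) ^ (-((s+1:ℕ):ℤ) - 3) + 2 ^ (-(s:ℤ) - 3) ≤ 2 ^ (-(s:ℤ) - 2) := by
      push_cast
      have e1 : (-((s:ℤ)+1) - 3) = -(s:ℤ) + (-4) := by ring
      have e2 : (-(s:ℤ) - 3) = -(s:ℤ) + (-3) := by ring
      have e3 : (-(s:ℤ) - 2) = -(s:ℤ) + (-2) := by ring
      rw [e1, e2, e3, zpow_add₀ (two_ne_zero), zpow_add₀ (two_ne_zero),
        zpow_add₀ (two_ne_zero)]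
      have hp : (0:ℝ) < 2 ^ (-(s:ℤ)) := by positivity
      have : ((2:ℝ) ^ (-4:ℤ)) + 2 ^ (-3:ℤ) ≤ 2 ^ (-2:ℤ) := by norm_num
      nlinarith
    calc |pg (s + 1) (xs (m (s + 1) (s + 1))) - pg s (xs (m s s))|
        ≤ 2 ^ (-((s+1:ℕ):ℤ) - 3) + d s + 2 ^ (-(s:ℤ) - 3) := by
          have := tri
          linarith [h1, h2, h3]
      _ ≤ 2 ^ (-(s:ℤ) - 2) + d s := by linarith [hpow]
  -- geometric facts
  have hgeo_eq : ∀ k : ℤ, ∀ s : ℕ, (2:ℝ) ^ (-(s:ℤ) + k) = 2 ^ (k:ℤ) * (1/2) ^ s := by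
    intro k s
    rw [zpow_add₀ (two_ne_zero), zpow_neg, zpow_natCast]
    rw [one_div, inv_pow]
    ring
  have hgeo_sum : Summable (fun s : ℕ => (2:ℝ) ^ (-(s:ℤ) - 2)) := by
    have : (fun s : ℕ => (2:ℝ) ^ (-(s:ℤ) - 2)) = fun s => 2 ^ (-2:ℤ) * (1/2) ^ s := by
      funext s
      rw [show (-(s:ℤ) - 2) = -(s:ℤ) + (-2) by ring, hgeo_eq]
    rw [this]
    exact summable_geometric_two.mul_left _
  have hgeo_tsum : (∑' s : ℕ, (2:ℝ) ^ (-(s:ℤ) - 2)) = 1/2 := by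
    have : (fun s : ℕ => (2:ℝ) ^ (-(s:ℤ) - 2)) = fun s => 2 ^ (-2:ℤ) * (1/2) ^ s := by
      funext s
      rw [show (-(s:ℤ) - 2) = -(s:ℤ) + (-2) by ring, hgeo_eq]
    rw [this, tsum_mul_left, tsum_geometric_two]
    norm_num
  have hsumg : Summable (fun s : ℕ => (2:ℝ) ^ (-(s:ℤ) - 2) + d s) := hgeo_sum.add hsum
  -- summability of the differences
  have hsumy : Summable (fun s : ℕ =>
      |pg (s + 1) (xs (m (s + 1) (s + 1))) - pg s (xs (m s s))|) :=
    Summable.of_nonneg_of_le (fun s => abs_nonneg _) hkey hsumg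
  refine ⟨?_, hsumy, ?_⟩
  · -- convergence to f x
    have h1 : Tendsto (fun s => pg s x) atTop (𝓝 (f x)) := hunif.tendsto_at hx
    have hz : Tendsto (fun s : ℕ => (2:ℝ) ^ (-(s:ℤ) - 3)) atTop (𝓝 0) := by
      have : (fun s : ℕ => (2:ℝ) ^ (-(s:ℤ) - 3)) = fun s => 2 ^ (-3:ℤ) * (1/2) ^ s := by
        funext s
        rw [show (-(s:ℤ) - 3) = -(s:ℤ) + (-3) by ring, hgeo_eq]
      rw [this]
      have := (tendsto_pow_atTop_nhds_zero_of_lt_one (by norm_num : (0:ℝ) ≤ 1/2)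
        (by norm_num : (1/2:ℝ) < 1)).const_mul ((2:ℝ) ^ (-3:ℤ))
      simpa using this
    have h2 : Tendsto (fun s : ℕ => pg s (xs (m s s)) - pg s x) atTop (𝓝 0) := by
      apply squeeze_zero_norm _ hz
      intro s
      simpa using hnear s
    have := h2.add h1
    simpa using this
  · -- sum bound
    calc (∑' s : ℕ, |pg (s + 1) (xs (m (s + 1) (s + 1))) - pg s (xs (m s s))|)
        ≤ ∑' s : ℕ, ((2:ℝ) ^ (-(s:ℤ) - 2) + d s) := Summable.tsum_le_tsum hkey hsumy hsumg
      _ = (∑' s : ℕ, (2:ℝ) ^ (-(s:ℤ) - 2)) + ∑' s : ℕ, d s := Summable.tsum_add hgeo_sum hsum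
      _ ≤ 1/2 + 1/2 := by
          rw [hgeo_tsum]
          linarith [hhalf]
      _ = 1 := by norm_num
end
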